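/- Let P be a set of n points in ℝ² with no two points having the same x-coordinate. Then P can be identified by at most ⌈(n+1)/2⌉ disks. -/

import Mathlib

noncomputable section

/-- The Euclidean plane. -/
abbrev Pt : Type := EuclideanSpace ℝ (Fin 2)

/-- A disk: a closed Euclidean ball with nonnegative radius. -/
def IsDisk (D : Set Pt) : Prop :=
  ∃ (c : Pt) (r : ℝ), 0 ≤ r ∧ D = Metric.closedBall c r

/-- A family of disks identifies a finite point set: every point is covered and
every pair of distinct points is separated by some disk. -/
def Identifies (𝒟 : Finset (Set Pt)) (P : Finset Pt) : Prop :=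
  (∀ p ∈ P, ∃ D ∈ 𝒟, p ∈ D) ∧
  (∀ p ∈ P, ∀ q ∈ P, p ≠ q → ∃ D ∈ 𝒟, (p ∈ D ∧ q ∉ D) ∨ (q ∈ D ∧ p ∉ D))

/-- Minimum number of disks needed to identify `P`. -/
def gammaID (P : Finset Pt) : ℕ :=
  sInf {k | ∃ 𝒟 : Finset (Set Pt), 𝒟.card = k ∧ (∀ D ∈ 𝒟, IsDisk D) ∧ Identifies 𝒟 P}

/-!
Split `P` by a vertical line `x = m` into a left part `L` of `⌈n/2⌉` points and a right part `R`
of `⌊n/2⌋` points. One huge disk, approximating the half-plane `x < m`, contains `L` and misses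
`R`, so it separates every left point from every right point. Among the remaining points, let
`ab` be the segment from `L` to `R` crossing the line highest: a huge disk through `a` and `b`
approximating the half-plane above `ab` meets the remaining points exactly in `{a, b}`. Removing
`a` and `b` and repeating (with singletons once `L` is used up) costs `|R|` disks, and two points
on the same side are separated by the disk of the step at which the first of them is removed.
-/

open Finset Filter

section Separation

variable {α : Type*}

def Covers (𝒟 : Finset (Set α)) (S : Finset α) : Prop :=
  ∀ p ∈ S, ∃ D ∈ 𝒟, p ∈ D

def SeparatesPoints (𝒟 : Finset (Set α)) (S : Finset α) : Prop :=
  ∀ p ∈ S, ∀ q ∈ S, p ≠ q → ∃ D ∈ 𝒟, (p ∈ D ∧ q ∉ D) ∨ (q ∈ D ∧ p ∉ D)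

variable {𝒟 𝒟' : Finset (Set α)} {S : Finset α}

lemma SeparatesPoints.mono (h : SeparatesPoints 𝒟 S) (h𝒟 : 𝒟 ⊆ 𝒟') : SeparatesPoints 𝒟' S :=
  fun p hp q hq hpq => (h p hp q hq hpq).imp fun _ ⟨hD, hsep⟩ => ⟨h𝒟 hD, hsep⟩

lemma separatesPoints_of_card_le_one (hS : #S ≤ 1) : SeparatesPoints 𝒟 S :=
  fun p hp q hq hpq => absurd (card_le_one.1 hS p hp q hq) hpq

lemma separatesPoints_singletons [DecidableEq α] (S : Finset α) :
    SeparatesPoints (S.image ({·})) S :=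
  fun p hp _ _ hpq => ⟨{p}, mem_image_of_mem _ hp, .inl ⟨rfl, Ne.symm hpq⟩⟩

lemma covers_singletons [DecidableEq α] (S : Finset α) : Covers (S.image ({·})) S :=
  fun p hp => ⟨{p}, mem_image_of_mem _ hp, rfl⟩

variable [DecidableEq α] [DecidableEq (Set α)] {D : Set α} {a : α}

lemma Covers.insert (h : Covers 𝒟 (S.erase a)) (ha : a ∈ D) : Covers (insert D 𝒟) S := by
  intro p hp
  by_cases hpa : p = a
  · exact ⟨D, mem_insert_self _ _, hpa ▸ ha⟩
  · obtain ⟨D', hD', hpD'⟩ := h p (mem_erase.2 ⟨hpa, hp⟩)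
    exact ⟨D', mem_insert_of_mem hD', hpD'⟩

lemma SeparatesPoints.insert (h : SeparatesPoints 𝒟 (S.erase a)) (ha : a ∈ D)
    (hD : ∀ c ∈ S, c ≠ a → c ∉ D) : SeparatesPoints (insert D 𝒟) S := by
  intro p hp q hq hpq
  by_cases hpa : p = a
  · exact ⟨D, mem_insert_self _ _, .inl ⟨hpa ▸ ha, hD q hq (hpa ▸ hpq.symm)⟩⟩
  by_cases hqa : q = a
  · exact ⟨D, mem_insert_self _ _, .inr ⟨hqa ▸ ha, hD p hp (hqa ▸ hpq)⟩⟩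
  exact (h p (mem_erase.2 ⟨hpa, hp⟩) q (mem_erase.2 ⟨hqa, hq⟩) hpq).imp
    fun _ ⟨hD', hsep⟩ => ⟨mem_insert_of_mem hD', hsep⟩

end Separation

lemma exists_subset_card_eq_forall_lt {α β : Type*} [DecidableEq α] [LinearOrder β] (f : α → β)
    {X : Finset α} (hf : Set.InjOn f X) {c : ℕ} (hc : c ≤ #X) :
    ∃ Y ⊆ X, #Y = c ∧ ∀ y ∈ Y, ∀ x ∈ X \ Y, f y < f x := by
  induction c with
  | zero => exact ⟨∅, empty_subset X, rfl, by simp⟩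
  | succ c ih =>
    obtain ⟨Y, hYX, hYc, hY⟩ := ih (by omega)
    have hne : (X \ Y).Nonempty := by rw [← card_pos, card_sdiff_of_subset hYX]; omega
    obtain ⟨x₀, hx₀, hmin⟩ := (X \ Y).exists_min_image f hne
    obtain ⟨hx₀X, hx₀Y⟩ := mem_sdiff.1 hx₀
    refine ⟨insert x₀ Y, insert_subset hx₀X hYX, by rw [card_insert_of_notMem hx₀Y, hYc], ?_⟩
    intro y hy x hx
    obtain ⟨hxX, hxY⟩ := mem_sdiff.1 hx
    have hxx₀ : x ≠ x₀ := fun h => hxY (h ▸ mem_insert_self x₀ Y)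
    have hxXY : x ∈ X \ Y := mem_sdiff.2 ⟨hxX, fun h => hxY (mem_insert_of_mem h)⟩
    rcases mem_insert.1 hy with rfl | hyY
    · exact (hmin x hxXY).lt_of_ne (hf.ne hx₀X hxX hxx₀.symm)
    · exact hY y hyY x hxXY

theorem exists_covers_separatesPoints {α : Type*} {good : Set α → Prop}
    (hsingleton : ∀ x, good {x}) (L R : Finset α) (hcard : #L ≤ #R + 1)
    (hpair : ∀ L' ⊆ L, ∀ R' ⊆ R, L'.Nonempty → R'.Nonempty →
      ∃ a ∈ L', ∃ b ∈ R', ∃ D, good D ∧ a ∈ D ∧ b ∈ D ∧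
        (∀ c ∈ L', c ≠ a → c ∉ D) ∧ ∀ c ∈ R', c ≠ b → c ∉ D) :
    ∃ 𝒟 : Finset (Set α), #𝒟 ≤ #R ∧ (∀ D ∈ 𝒟, good D) ∧ Covers 𝒟 R ∧
      SeparatesPoints 𝒟 L ∧ SeparatesPoints 𝒟 R := by
  classical
  induction R using Finset.strongInduction generalizing L with
  | H R ih =>
  rcases R.eq_empty_or_nonempty with rfl | hR
  · exact ⟨∅, le_rfl, by simp, fun p hp => absurd hp (notMem_empty p),
      separatesPoints_of_card_le_one (by simpa using hcard),
      separatesPoints_of_card_le_one (by simp)⟩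
  rcases L.eq_empty_or_nonempty with rfl | hL
  · exact ⟨R.image ({·}), card_image_le, by simpa using fun x _ => hsingleton x,
      covers_singletons R, separatesPoints_of_card_le_one (by simp), separatesPoints_singletons R⟩
  obtain ⟨a, ha, b, hb, D, hD, haD, hbD, hDL, hDR⟩ := hpair L subset_rfl R subset_rfl hL hR
  have hcard' : #(L.erase a) ≤ #(R.erase b) + 1 := by
    rw [card_erase_of_mem ha, card_erase_of_mem hb]
    have := hR.card_pos
    omega
  obtain ⟨𝒟, h𝒟card, h𝒟good, hcov, hsepL, hsepR⟩ :=
    ih (R.erase b) (erase_ssubset hb) (L.erase a) hcard' fun L' hL' R' hR' =>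
      hpair L' (hL'.trans (erase_subset a L)) R' (hR'.trans (erase_subset b R))
  refine ⟨insert D 𝒟, ?_, ?_, hcov.insert hbD, hsepL.insert haD hDL, hsepR.insert hbD hDR⟩
  · calc #(insert D 𝒟) ≤ #𝒟 + 1 := card_insert_le D 𝒟
      _ ≤ #R := by rw [card_erase_of_mem hb] at h𝒟card; have := hR.card_pos; omega
  · simpa [hD] using h𝒟good

lemma dist_sq_eq_coords (p q : Pt) : dist p q ^ 2 = (p 0 - q 0) ^ 2 + (p 1 - q 1) ^ 2 := by
  rw [EuclideanSpace.dist_sq_eq, Fin.sum_univ_two, Real.dist_eq, Real.dist_eq, sq_abs, sq_abs]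

lemma mem_closedBall_iff_coords {z p : Pt} {r : ℝ} (hr : 0 ≤ r) :
    p ∈ Metric.closedBall z r ↔ (p 0 - z 0) ^ 2 + (p 1 - z 1) ^ 2 ≤ r ^ 2 := by
  rw [Metric.mem_closedBall, ← dist_sq_eq_coords, sq_le_sq₀ dist_nonneg hr]

lemma isDisk_singleton (p : Pt) : IsDisk {p} := ⟨p, 0, le_rfl, Metric.closedBall_zero.symm⟩

lemma exists_isDisk_forall_mem_of_lt (m : ℝ) (S : Finset Pt) (hS : ∀ p ∈ S, p 0 < m) :
    ∃ H : Set Pt, IsDisk H ∧ (∀ p ∈ S, p ∈ H) ∧ ∀ p : Pt, m < p 0 → p ∉ H := by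
  have hK : ∀ᶠ K in atTop, 0 ≤ K ∧ ∀ p ∈ S, (p 0 - m) ^ 2 + p 1 ^ 2 + 2 * K * (p 0 - m) ≤ 0 := by
    refine (eventually_ge_atTop 0).and ((eventually_all_finset S).2 fun p hp => ?_)
    have hpm : 0 < 2 * (m - p 0) := by linarith [hS p hp]
    filter_upwards [eventually_gt_atTop (((p 0 - m) ^ 2 + p 1 ^ 2) / (2 * (m - p 0)))] with K hK
    rw [div_lt_iff₀ hpm] at hK
    linarith
  obtain ⟨K, hK0, hKS⟩ := hK.exists
  -- the disk of radius `K` tangent to the line `x = m` at `(m, 0)`, from the left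
  have hmem : ∀ p : Pt, p ∈ Metric.closedBall !₂[m - K, 0] K ↔
      (p 0 - m) ^ 2 + p 1 ^ 2 + 2 * K * (p 0 - m) ≤ 0 := fun p => by
    rw [mem_closedBall_iff_coords hK0]
    simp only [Matrix.cons_val_zero, Matrix.cons_val_one]
    rw [← sub_nonpos]
    ring_nf
  refine ⟨_, ⟨_, K, hK0, rfl⟩, fun p hp => (hmem p).2 (hKS p hp), fun p hp hpH => ?_⟩
  have := (hmem p).1 hpH
  nlinarith [sq_nonneg (p 0 - m), sq_nonneg (p 1)]

lemma exists_abscissa_between {L R : Finset Pt} (hLR : ∀ a ∈ L, ∀ b ∈ R, a 0 < b 0) :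
    ∃ m, (∀ a ∈ L, a 0 < m) ∧ ∀ b ∈ R, m < b 0 := by
  classical
  simpa using (L.image (· 0)).exists_between' (R.image (· 0)) (by simpa using hLR)

/-- Twice the signed area of the triangle `abc`: positive iff `c` lies to the left of the
directed line `ab`. -/
def cross (a b c : Pt) : ℝ := (b 0 - a 0) * (c 1 - a 1) - (b 1 - a 1) * (c 0 - a 0)

/-- The inner product `⟪c - a, c - b⟫`: positive iff `c` lies outside the closed disk with
diameter `ab`. -/
def segDot (a b c : Pt) : ℝ := (c 0 - a 0) * (c 0 - b 0) + (c 1 - a 1) * (c 1 - b 1)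

def BelowOrOffSegment (a b c : Pt) : Prop :=
  cross a b c < 0 ∨ (cross a b c = 0 ∧ 0 < segDot a b c)

lemma segDot_pos_of_cross_eq_zero {a b c : Pt} (hab : a 0 < b 0) (hc : cross a b c = 0)
    (hout : c 0 < a 0 ∨ b 0 < c 0) : 0 < segDot a b c := by
  have hx : 0 < (c 0 - a 0) * (c 0 - b 0) := by
    rcases hout with h | h
    · exact mul_pos_of_neg_of_neg (by linarith) (by linarith)
    · exact mul_pos (by linarith) (by linarith)
  -- on the line `ab`, the `y`-offsets are the `x`-offsets scaled by the slope
  have hscaled : segDot a b c * (b 0 - a 0) ^ 2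
      = (c 0 - a 0) * (c 0 - b 0) * ((b 0 - a 0) ^ 2 + (b 1 - a 1) ^ 2) := by
    unfold cross at hc
    unfold segDot
    linear_combination ((b 0 - a 0) * (c 1 - a 1) + (b 1 - a 1) * (c 0 - a 0)
      - (b 0 - a 0) * (b 1 - a 1)) * hc
  refine pos_of_mul_pos_left ?_ (sq_nonneg (b 0 - a 0))
  rw [hscaled]
  positivity

/-- As `k → ∞` these disks through `a` and `b` grow into the half-plane to the left of `ab`. -/
lemma exists_isDisk_mem_mem_of_belowOrOffSegment (a b : Pt) (F : Finset Pt)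
    (hF : ∀ c ∈ F, BelowOrOffSegment a b c) :
    ∃ D : Set Pt, IsDisk D ∧ a ∈ D ∧ b ∈ D ∧ ∀ c ∈ F, c ∉ D := by
  have hk : ∀ᶠ k in atTop, ∀ c ∈ F, 0 < segDot a b c - 2 * k * cross a b c := by
    refine (eventually_all_finset F).2 fun c hc => ?_
    rcases hF c hc with hneg | ⟨hzero, hpos⟩
    · filter_upwards [eventually_gt_atTop (segDot a b c / (2 * cross a b c))] with k hk
      rw [div_lt_iff_of_neg (by linarith)] at hk
      linarith
    · exact Eventually.of_forall fun k => by rw [hzero]; linarith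
  obtain ⟨k, hkF⟩ := hk.exists
  set z : Pt := !₂[(a 0 + b 0) / 2 - k * (b 1 - a 1), (a 1 + b 1) / 2 + k * (b 0 - a 0)]
  have hmem : ∀ p : Pt, p ∈ Metric.closedBall z (dist a z) ↔
      segDot a b p - 2 * k * cross a b p ≤ 0 := fun p => by
    rw [Metric.mem_closedBall, ← sq_le_sq₀ dist_nonneg dist_nonneg, dist_sq_eq_coords,
      dist_sq_eq_coords, ← sub_nonpos]
    simp only [z, segDot, cross, Matrix.cons_val_zero, Matrix.cons_val_one]
    ring_nf
  refine ⟨_, ⟨z, _, dist_nonneg, rfl⟩, (hmem a).2 ?_, (hmem b).2 ?_,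
    fun c hc hcD => (hkF c hc).not_ge ((hmem c).1 hcD)⟩ <;>
  exact le_of_eq (by unfold segDot cross; ring)

/-- The height at abscissa `m` of the line through `a` and `b`. -/
def lineAt (m : ℝ) (a b : Pt) : ℝ := a 1 + (b 1 - a 1) * (m - a 0) / (b 0 - a 0)

lemma lineAt_sub_lineAt_of_left (m : ℝ) {a b c : Pt} (hab : a 0 < b 0) (hcb : c 0 < b 0) :
    lineAt m c b - lineAt m a b = cross a b c * ((b 0 - m) / ((b 0 - a 0) * (b 0 - c 0))) := by
  have : b 0 - a 0 ≠ 0 := by linarith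
  have : b 0 - c 0 ≠ 0 := by linarith
  unfold lineAt cross
  field_simp
  ring

lemma lineAt_sub_lineAt_of_right (m : ℝ) {a b c : Pt} (hab : a 0 < b 0) (hac : a 0 < c 0) :
    lineAt m a c - lineAt m a b = cross a b c * ((m - a 0) / ((b 0 - a 0) * (c 0 - a 0))) := by
  have : b 0 - a 0 ≠ 0 := by linarith
  have : c 0 - a 0 ≠ 0 := by linarith
  unfold lineAt cross
  field_simp
  ring

/-- Choose the pair whose segment crosses `x = m` highest, and among those the shortest one in
`x`-extent: every other point is then below its line, or on it beyond an endpoint. -/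
lemma exists_topmost_crossing_pair (m : ℝ) {L R : Finset Pt} (hL : ∀ a ∈ L, a 0 < m)
    (hR : ∀ b ∈ R, m < b 0) (hLinj : Set.InjOn (· 0) (L : Set Pt))
    (hRinj : Set.InjOn (· 0) (R : Set Pt)) (hLne : L.Nonempty) (hRne : R.Nonempty) :
    ∃ a ∈ L, ∃ b ∈ R, (∀ c ∈ L, c ≠ a → BelowOrOffSegment a b c) ∧
      ∀ c ∈ R, c ≠ b → BelowOrOffSegment a b c := by
  obtain ⟨⟨a, b⟩, hab, hmax⟩ := (L ×ˢ R).exists_max_image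
    (fun q => toLex (lineAt m q.1 q.2, q.1 0 - q.2 0)) (hLne.product hRne)
  obtain ⟨ha, hb⟩ := mem_product.1 hab
  have hab0 : a 0 < b 0 := (hL a ha).trans (hR b hb)
  refine ⟨a, ha, b, hb, fun c hc hca => ?_, fun c hc hcb => ?_⟩
  · have hcb : c 0 < b 0 := (hL c hc).trans (hR b hb)
    have hs : 0 < (b 0 - m) / ((b 0 - a 0) * (b 0 - c 0)) :=
      div_pos (by linarith [hR b hb]) (mul_pos (by linarith) (by linarith))
    have hdiff := lineAt_sub_lineAt_of_left m hab0 hcb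
    rcases Prod.Lex.toLex_le_toLex.1 (hmax (c, b) (mem_product.2 ⟨hc, hb⟩)) with hlt | ⟨heq, hw⟩
    · exact .inl (neg_of_mul_neg_left (by linarith) hs.le)
    · have h0 : cross a b c = 0 := (mul_eq_zero.1 (by linarith)).resolve_right hs.ne'
      have hca0 : c 0 < a 0 := lt_of_le_of_ne (by linarith) (hLinj.ne hc ha hca)
      exact .inr ⟨h0, segDot_pos_of_cross_eq_zero hab0 h0 (.inl hca0)⟩
  · have hac : a 0 < c 0 := (hL a ha).trans (hR c hc)
    have hs : 0 < (m - a 0) / ((b 0 - a 0) * (c 0 - a 0)) :=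
      div_pos (by linarith [hL a ha]) (mul_pos (by linarith) (by linarith))
    have hdiff := lineAt_sub_lineAt_of_right m hab0 hac
    rcases Prod.Lex.toLex_le_toLex.1 (hmax (a, c) (mem_product.2 ⟨ha, hc⟩)) with hlt | ⟨heq, hw⟩
    · exact .inl (neg_of_mul_neg_left (by linarith) hs.le)
    · have h0 : cross a b c = 0 := (mul_eq_zero.1 (by linarith)).resolve_right hs.ne'
      have hbc0 : b 0 < c 0 := lt_of_le_of_ne (by linarith) (hRinj.ne hb hc hcb.symm)
      exact .inr ⟨h0, segDot_pos_of_cross_eq_zero hab0 h0 (.inr hbc0)⟩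

lemma exists_isDisk_crossing_pair {L R : Finset Pt} (hLR : ∀ a ∈ L, ∀ b ∈ R, a 0 < b 0)
    (hLinj : Set.InjOn (· 0) (L : Set Pt)) (hRinj : Set.InjOn (· 0) (R : Set Pt))
    (hLne : L.Nonempty) (hRne : R.Nonempty) :
    ∃ a ∈ L, ∃ b ∈ R, ∃ D, IsDisk D ∧ a ∈ D ∧ b ∈ D ∧
      (∀ c ∈ L, c ≠ a → c ∉ D) ∧ ∀ c ∈ R, c ≠ b → c ∉ D := by
  obtain ⟨m, hLm, hRm⟩ := exists_abscissa_between hLR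
  obtain ⟨a, ha, b, hb, hbelowL, hbelowR⟩ :=
    exists_topmost_crossing_pair m hLm hRm hLinj hRinj hLne hRne
  obtain ⟨D, hD, haD, hbD, hF⟩ := exists_isDisk_mem_mem_of_belowOrOffSegment a b
    (L.erase a ∪ R.erase b) (by
      simp only [mem_union, mem_erase]
      rintro c (⟨hca, hc⟩ | ⟨hcb, hc⟩)
      exacts [hbelowL c hc hca, hbelowR c hc hcb])
  exact ⟨a, ha, b, hb, D, hD, haD, hbD,
    fun c hc hca => hF c (mem_union_left _ (mem_erase.2 ⟨hca, hc⟩)),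
    fun c hc hcb => hF c (mem_union_right _ (mem_erase.2 ⟨hcb, hc⟩))⟩

lemma identifies_insert_union [DecidableEq (Set Pt)] {H : Set Pt} {𝒟 : Finset (Set Pt)}
    {L R : Finset Pt} (hLH : ∀ p ∈ L, p ∈ H) (hRH : ∀ p ∈ R, p ∉ H) (hcov : Covers 𝒟 R)
    (hsepL : SeparatesPoints 𝒟 L) (hsepR : SeparatesPoints 𝒟 R) :
    Identifies (insert H 𝒟) (L ∪ R) := by
  refine ⟨fun p hp => ?_, fun p hp q hq hpq => ?_⟩
  · rcases mem_union.1 hp with hpL | hpR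
    · exact ⟨H, mem_insert_self H 𝒟, hLH p hpL⟩
    · obtain ⟨D, hD, hpD⟩ := hcov p hpR
      exact ⟨D, mem_insert_of_mem hD, hpD⟩
  rcases mem_union.1 hp with hpL | hpR <;> rcases mem_union.1 hq with hqL | hqR
  · exact hsepL.mono (subset_insert H 𝒟) p hpL q hqL hpq
  · exact ⟨H, mem_insert_self H 𝒟, .inl ⟨hLH p hpL, hRH q hqR⟩⟩
  · exact ⟨H, mem_insert_self H 𝒟, .inr ⟨hLH q hqL, hRH p hpR⟩⟩
  · exact hsepR.mono (subset_insert H 𝒟) p hpR q hqR hpq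

theorem upper_bound_distinct_abscissa (P : Finset Pt)
    (hx : ∀ p ∈ P, ∀ q ∈ P, p ≠ q → p 0 ≠ q 0) :
    ∃ 𝒟 : Finset (Set Pt), (∀ D ∈ 𝒟, IsDisk D) ∧ Identifies 𝒟 P ∧
      𝒟.card ≤ (P.card + 2) / 2 := by
  classical
  have hinj : Set.InjOn (· 0) (P : Set Pt) := fun p hp q hq h =>
    by_contra fun hpq => hx p hp q hq hpq h
  obtain ⟨L, hLP, hLcard, hLR⟩ :=
    exists_subset_card_eq_forall_lt (· 0) hinj (Nat.sub_le #P (#P / 2))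
  set R := P \ L
  have hRcard : #R = #P / 2 := by rw [card_sdiff_of_subset hLP]; omega
  obtain ⟨m, hLm, hRm⟩ := exists_abscissa_between hLR
  obtain ⟨H, hH, hLH, hRH⟩ := exists_isDisk_forall_mem_of_lt m L hLm
  obtain ⟨𝒟, h𝒟card, h𝒟disk, hcov, hsepL, hsepR⟩ :=
    exists_covers_separatesPoints isDisk_singleton L R (by omega) fun L' hL' R' hR' =>
      exists_isDisk_crossing_pair (fun a ha b hb => hLR a (hL' ha) b (hR' hb))
        (hinj.mono (by simpa using hL'.trans hLP))
        (hinj.mono (by simpa using hR'.trans sdiff_subset))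
  refine ⟨insert H 𝒟, by simpa [hH] using h𝒟disk, ?_, ?_⟩
  · rw [← union_sdiff_of_subset hLP]
    exact identifies_insert_union hLH (fun p hp => hRH p (hRm p hp)) hcov hsepL hsepR
  · calc #(insert H 𝒟) ≤ #𝒟 + 1 := card_insert_le H 𝒟
      _ ≤ (#P + 2) / 2 := by omega
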